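/- Fix a matrix A ∈ ℝ^{m×n}, a vector b ∈ ℝ^m, and parameters λ > 0, ρ > 0. Let M := AᵀA + ρI (which is invertible since ρ > 0), ν := M⁻¹Aᵀb, c := √n·(λ/ρ)·‖2ρM⁻¹ − I‖₂ + ‖ν‖₂, and σ := ‖ρM⁻¹‖₂, where ‖·‖₂ on matrices denotes the spectral (operator 2-) norm. Consider the ADMM iteration x^{k+1} = M⁻¹(Aᵀb + ρ(z^k − w^k)), z^{k+1} = S_{λ/ρ}(x^{k+1} + w^k), w^{k+1} = w^k + x^{k+1} − z^{k+1}, initialized with z⁰ = w⁰ = 0. If σ = 1, then for every k ≥ 1 it holds that ‖x^{k+1} + w^k‖_∞ ≤ ‖ν‖₂ + k·c. -/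

import Mathlib

open Matrix

/-- The soft thresholding operator `S_α`, applied componentwise. -/
noncomputable def softT {n : ℕ} (α : ℝ) (x : Fin n → ℝ) : Fin n → ℝ :=
  fun i => max (x i - α) 0 - max (-x i - α) 0

/-- Euclidean (ℓ2) norm of a vector in `ℝⁿ`. -/
noncomputable def l2 {n : ℕ} (x : Fin n → ℝ) : ℝ := Real.sqrt (∑ i, x i ^ 2)

/-- Spectral norm (operator 2-norm) of a square real matrix. -/
noncomputable def specNorm {n : ℕ} (M : Matrix (Fin n) (Fin n) ℝ) : ℝ :=
  ‖Matrix.toEuclideanCLM (𝕜 := ℝ) M‖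

lemma l2_eq {n : ℕ} (x : Fin n → ℝ) :
    l2 x = ‖(WithLp.equiv 2 (Fin n → ℝ)).symm x‖ := by
  rw [EuclideanSpace.norm_eq]
  simp [l2, sq_abs]

lemma l2_nonneg {n : ℕ} (x : Fin n → ℝ) : 0 ≤ l2 x := Real.sqrt_nonneg _

lemma l2_mulVec_le {n : ℕ} (M : Matrix (Fin n) (Fin n) ℝ) (v : Fin n → ℝ) :
    l2 (M *ᵥ v) ≤ specNorm M * l2 v := by
  rw [l2_eq, l2_eq]
  exact ContinuousLinearMap.le_opNorm (Matrix.toEuclideanCLM (𝕜 := ℝ) M) ((WithLp.equiv 2 (Fin n → ℝ)).symm v)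

lemma l2_add_sub_le {n : ℕ} (a b c : Fin n → ℝ) :
    l2 (a + b - c) ≤ l2 a + l2 b + l2 c := by
  simp only [l2_eq]
  have : (WithLp.equiv 2 (Fin n → ℝ)).symm (a + b - c)
      = (WithLp.equiv 2 (Fin n → ℝ)).symm a + (WithLp.equiv 2 (Fin n → ℝ)).symm b
        - (WithLp.equiv 2 (Fin n → ℝ)).symm c := rfl
  rw [this]
  calc ‖_ + _ - _‖ ≤ ‖_ + _‖ + ‖_‖ := norm_sub_le _ _
    _ ≤ _ := by gcongr; exact norm_add_le _ _

lemma sup_le_l2 {n : ℕ} (x : Fin n → ℝ) : ‖x‖ ≤ l2 x := by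
  refine (pi_norm_le_iff_of_nonneg (l2_nonneg x)).2 fun i => ?_
  rw [Real.norm_eq_abs, ← Real.sqrt_sq_eq_abs]
  exact Real.sqrt_le_sqrt (Finset.single_le_sum (f := fun i => x i ^ 2)
    (fun j _ => sq_nonneg _) (Finset.mem_univ i))

lemma abs_sub_softT_le {n : ℕ} {α : ℝ} (hα : 0 ≤ α) (x : Fin n → ℝ) (i : Fin n) :
    |x i - softT α x i| ≤ α := by
  simp only [softT]
  rcases le_total α (x i) with h | h
  · rw [max_eq_left (by linarith), max_eq_right (by linarith)]
    rw [abs_le]; constructor <;> linarith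
  · rcases le_total (x i) (-α) with h' | h'
    · rw [max_eq_right (by linarith), max_eq_left (by linarith)]
      rw [abs_le]; constructor <;> linarith
    · rw [max_eq_right (by linarith), max_eq_right (by linarith)]
      rw [abs_le]; constructor <;> linarith

lemma l2_le_of_bdd {n : ℕ} {α : ℝ} (hα : 0 ≤ α) (v : Fin n → ℝ)
    (h : ∀ i, |v i| ≤ α) : l2 v ≤ Real.sqrt n * α := by
  have : l2 v ≤ Real.sqrt (∑ _i : Fin n, α ^ 2) := by
    apply Real.sqrt_le_sqrt
    apply Finset.sum_le_sum
    intro i _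
    rw [← sq_abs]
    exact pow_le_pow_left₀ (abs_nonneg _) (h i) 2
  refine this.trans_eq ?_
  rw [Finset.sum_const, Finset.card_univ, Fintype.card_fin, nsmul_eq_mul,
    Real.sqrt_mul (by positivity), Real.sqrt_sq hα]

/-- The `σ = 1` case of Lemma 1: the ADMM iterates for the Lasso problem satisfy
`‖x^{k+1} + w^k‖_∞ ≤ ‖ν‖₂ + k c`.  Here `‖·‖` on `Fin n → ℝ`
is the sup norm. -/
theorem admm_lasso_bound_marginal {m n : ℕ}
    (A : Matrix (Fin m) (Fin n) ℝ) (b : Fin m → ℝ)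
    (lam ρ : ℝ) (hlam : 0 < lam) (hρ : 0 < ρ)
    (M : Matrix (Fin n) (Fin n) ℝ) (hM : M = Aᵀ * A + ρ • 1)
    (ν : Fin n → ℝ) (hν : ν = M⁻¹ *ᵥ (Aᵀ *ᵥ b))
    (c : ℝ) (hc : c = Real.sqrt n * (lam / ρ) * specNorm ((2 * ρ) • M⁻¹ - 1) + l2 ν)
    (σ : ℝ) (hσdef : σ = specNorm (ρ • M⁻¹))
    (x z w : ℕ → Fin n → ℝ)
    (hz0 : z 0 = 0) (hw0 : w 0 = 0)
    (hx : ∀ k, x (k + 1) = M⁻¹ *ᵥ (Aᵀ *ᵥ b + ρ • (z k - w k)))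
    (hz : ∀ k, z (k + 1) = softT (lam / ρ) (x (k + 1) + w k))
    (hw : ∀ k, w (k + 1) = w k + x (k + 1) - z (k + 1))
    (hσ : σ = 1) :
    ∀ k : ℕ, 1 ≤ k →
      ‖x (k + 1) + w k‖ ≤ l2 ν + (k : ℝ) * c := by
  set α := lam / ρ with hαdef
  have hα : 0 ≤ α := by positivity
  set u : ℕ → Fin n → ℝ := fun k => x (k + 1) + w k with hu
  set P : (Fin n → ℝ) → (Fin n → ℝ) := fun v => v - softT α v with hP
  -- P bound
  have hPbound : ∀ v : Fin n → ℝ, l2 (P v) ≤ Real.sqrt n * α := fun v =>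
    l2_le_of_bdd hα _ (abs_sub_softT_le hα v)
  -- base case
  have hu0 : u 0 = ν := by
    simp [hu, hx 0, hz0, hw0, hν]
  -- recursion
  have hstep : ∀ j, u (j + 1) =
      ν + (ρ • M⁻¹) *ᵥ (u j) - ((2 * ρ) • M⁻¹ - 1) *ᵥ (P (u j)) := by
    intro j
    have hw' : w (j + 1) = P (u j) := by
      rw [hw, hz]
      show w j + x (j + 1) - softT α (x (j + 1) + w j) = _
      simp only [hP, hu]
      abel_nf
    have hz' : z (j + 1) = u j - P (u j) := by
      rw [hz]
      simp only [hP, hu]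
      abel
    show x (j + 2) + w (j + 1) = _
    rw [hx (j + 1), hw', hz']
    rw [mulVec_add, ← hν, Matrix.mulVec_smul]
    rw [Matrix.sub_mulVec, Matrix.smul_mulVec, Matrix.smul_mulVec,
      Matrix.one_mulVec, Matrix.mulVec_sub, Matrix.mulVec_sub]
    module
  -- induction on l2 norm
  have key : ∀ k : ℕ, l2 (u k) ≤ l2 ν + (k : ℝ) * c := by
    intro k
    induction k with
    | zero => simp [hu0]
    | succ j ih =>
      have h1 := l2_add_sub_le ν ((ρ • M⁻¹) *ᵥ (u j)) (((2 * ρ) • M⁻¹ - 1) *ᵥ (P (u j)))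
      have h2 := l2_mulVec_le (ρ • M⁻¹) (u j)
      have h3 := l2_mulVec_le ((2 * ρ) • M⁻¹ - 1) (P (u j))
      have h4 := hPbound (u j)
      have h5 : specNorm ((2 * ρ) • M⁻¹ - 1) * l2 (P (u j))
          ≤ specNorm ((2 * ρ) • M⁻¹ - 1) * (Real.sqrt n * α) := by
        apply mul_le_mul_of_nonneg_left h4 (norm_nonneg _)
      have hce : specNorm ((2 * ρ) • M⁻¹ - 1) * (Real.sqrt n * α) = c - l2 ν := by
        rw [hc]; ring
      have hσ1 : specNorm (ρ • M⁻¹) = 1 := by rw [← hσdef, hσ]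
      rw [hσ1, one_mul] at h2
      rw [hstep j]
      push_cast
      nlinarith [h1, h2, h3.trans h5, ih]
  intro k _
  exact (sup_le_l2 _).trans (key k)
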